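/- If k̄ < γ/β₁, then (i, x₁) = (0, 1) is a stable equilibrium of the epidemic-behavior co-evolution system: the Jacobian at (0,1) has trace P = −(γ − k̄β₁) − k₀(u(c₁) − u(c₂)) < 0 and determinant Q = k₀(γ − k̄β₁)(u(c₁) − u(c₂)) > 0. -/

import Mathlib

/-- Prelec weighting function extended by ω(0) = 0. -/
noncomputable def prelec0 (α p : ℝ) : ℝ :=
  if p = 0 then 0 else Real.exp (-((-Real.log p) ^ α))

/-- di/dt of the epidemic-behavior co-evolution system (with β₂ = 0). -/
noncomputable def F1 (γ kβ₁ i x : ℝ) : ℝ := i * (1 - i) * kβ₁ * x - γ * i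

/-- dx₁/dt of the epidemic-behavior co-evolution system. -/
noncomputable def F2 (α k₀ kβ₁ ucn uc1 uc2 i x : ℝ) : ℝ :=
  x * (1 - x) * (-(kβ₁ * i) + k₀ * (ucn * prelec0 α (kβ₁ * i) + uc1 - uc2))

/-! Since `F1` vanishes on the line `i = 0` and `F2` on the line `x = 1`, the Jacobian at `(0, 1)`
is diagonal, with entries `k̄β₁ - γ` and (using `ω(0) = 0`) `-k₀ (u(c₁) - u(c₂)) < 0`, so it is
stable exactly when `k̄β₁ < γ`. -/

lemma hasDerivAt_mul_one_sub (a : ℝ) : HasDerivAt (fun x : ℝ => x * (1 - x)) (1 - 2 * a) a :=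
  ((hasDerivAt_id' a).mul ((hasDerivAt_id' a).const_sub 1)).congr_deriv (by ring)

lemma hasDerivAt_F1_left (γ kβ₁ i x : ℝ) :
    HasDerivAt (fun i => F1 γ kβ₁ i x) ((1 - 2 * i) * kβ₁ * x - γ) i :=
  (((hasDerivAt_mul_one_sub i).mul_const kβ₁).mul_const x).sub ((hasDerivAt_id' i).const_mul γ)
    |>.congr_deriv (by simp only [mul_one])

lemma hasDerivAt_F2_right (α k₀ kβ₁ ucn uc1 uc2 i x : ℝ) :
    HasDerivAt (fun x => F2 α k₀ kβ₁ ucn uc1 uc2 i x)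
      ((1 - 2 * x) * (-(kβ₁ * i) + k₀ * (ucn * prelec0 α (kβ₁ * i) + uc1 - uc2))) x :=
  (hasDerivAt_mul_one_sub x).mul_const _

lemma F1_zero_left (γ kβ₁ x : ℝ) : F1 γ kβ₁ 0 x = 0 := by
  simp only [F1, zero_mul, mul_zero, sub_zero]

lemma F2_one_right (α k₀ kβ₁ ucn uc1 uc2 i : ℝ) : F2 α k₀ kβ₁ ucn uc1 uc2 i 1 = 0 := by
  simp only [F2, sub_self, mul_zero, zero_mul]

lemma prelec0_zero (α : ℝ) : prelec0 α 0 = 0 := if_pos rfl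

lemma deriv_F1_left_at_zero_one (γ kβ₁ : ℝ) : deriv (fun i => F1 γ kβ₁ i 1) 0 = kβ₁ - γ := by
  rw [(hasDerivAt_F1_left γ kβ₁ 0 1).deriv]
  ring

lemma deriv_F2_right_at_zero_one (α k₀ kβ₁ ucn uc1 uc2 : ℝ) :
    deriv (fun x => F2 α k₀ kβ₁ ucn uc1 uc2 0 x) 1 = -(k₀ * (uc1 - uc2)) := by
  rw [(hasDerivAt_F2_right α k₀ kβ₁ ucn uc1 uc2 0 1).deriv, mul_zero, prelec0_zero]
  ring

lemma deriv_F1_right_at_zero (γ kβ₁ x : ℝ) : deriv (fun x => F1 γ kβ₁ 0 x) x = 0 := by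
  simp only [F1_zero_left, deriv_const]

lemma deriv_F2_left_at_one (α k₀ kβ₁ ucn uc1 uc2 i : ℝ) :
    deriv (fun i => F2 α k₀ kβ₁ ucn uc1 uc2 i 1) i = 0 := by
  simp only [F2_one_right, deriv_const]

theorem stmt11_general (α γ k₀ kβ₁ ucn uc1 uc2 : ℝ)
    (hk₀ : 0 < k₀) (hΔ : 0 < uc1 - uc2) (hthr : kβ₁ < γ) :
    (deriv (fun i => F1 γ kβ₁ i 1) 0 + deriv (fun x => F2 α k₀ kβ₁ ucn uc1 uc2 0 x) 1
        = -(γ - kβ₁) - k₀ * (uc1 - uc2) ∧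
      -(γ - kβ₁) - k₀ * (uc1 - uc2) < 0) ∧
    (deriv (fun i => F1 γ kβ₁ i 1) 0 * deriv (fun x => F2 α k₀ kβ₁ ucn uc1 uc2 0 x) 1
        - deriv (fun x => F1 γ kβ₁ 0 x) 1 * deriv (fun i => F2 α k₀ kβ₁ ucn uc1 uc2 i 1) 0
        = k₀ * (γ - kβ₁) * (uc1 - uc2) ∧
      0 < k₀ * (γ - kβ₁) * (uc1 - uc2)) := by
  have hgap : 0 < γ - kβ₁ := sub_pos.mpr hthr
  rw [deriv_F1_left_at_zero_one, deriv_F2_right_at_zero_one, deriv_F1_right_at_zero,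
    deriv_F2_left_at_one]
  refine ⟨⟨by ring, ?_⟩, ⟨by ring, by positivity⟩⟩
  have : 0 < k₀ * (uc1 - uc2) := mul_pos hk₀ hΔ
  linarith

/-- If k̄ < γ/β₁ (i.e. k̄β₁ < γ), then (0,1) is a stable equilibrium: the
Jacobian at (0,1) has trace −(γ − k̄β₁) − k₀(u(c₁)−u(c₂)) < 0 and determinant
k₀(γ − k̄β₁)(u(c₁)−u(c₂)) > 0. -/
theorem stmt11 (α γ k₀ kβ₁ ucn uc1 uc2 : ℝ)
    (hα : 0 < α) (hα1 : α ≤ 1) (hγ : 0 < γ) (hk₀ : 0 < k₀) (hkβ : 0 < kβ₁)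
    (hucn : ucn < 0) (hΔ : 0 < uc1 - uc2) (hthr : kβ₁ < γ) :
    (deriv (fun i => F1 γ kβ₁ i 1) 0 + deriv (fun x => F2 α k₀ kβ₁ ucn uc1 uc2 0 x) 1
        = -(γ - kβ₁) - k₀ * (uc1 - uc2) ∧
      -(γ - kβ₁) - k₀ * (uc1 - uc2) < 0) ∧
    (deriv (fun i => F1 γ kβ₁ i 1) 0 * deriv (fun x => F2 α k₀ kβ₁ ucn uc1 uc2 0 x) 1
        - deriv (fun x => F1 γ kβ₁ 0 x) 1 * deriv (fun i => F2 α k₀ kβ₁ ucn uc1 uc2 i 1) 0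
        = k₀ * (γ - kβ₁) * (uc1 - uc2) ∧
      0 < k₀ * (γ - kβ₁) * (uc1 - uc2)) :=
  stmt11_general α γ k₀ kβ₁ ucn uc1 uc2 hk₀ hΔ hthr
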